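/- Let {P_1, P_2} be a partition of N with |P_1| = ⌈n/2⌉ and |P_2| = ⌊n/2⌋ that is swap-stable, i.e., for every i ∈ P_1 and j ∈ P_2, SW({P_1 \ {i} ∪ {j}, P_2 \ {j} ∪ {i}}) ≤ SW({P_1, P_2}). Let f be the total number of friendship relations (ordered pairs (i,j) with j ∈ F_i) and let f' be the number of friendship relations with both endpoints in P_1 or both in P_2. Then f' ≥ ((n−2)/(2n−1))·f. -/
import Mathlib


open Finset

/-- FA utility of agent `i` with friend set `t` for a coalition `C` containing her:
`u_i(C) = |C ∩ F_i| − |C ∩ E_i| / n`, where `E_i = N \ (F_i ∪ {i})`. -/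
def faUtil (n : ℕ) (t : Finset (Fin n)) (i : Fin n) (C : Finset (Fin n)) : ℚ :=
  ((C ∩ t).card : ℚ) - ((C \ (t ∪ {i})).card : ℚ) / (n : ℚ)

/-- Social welfare of the two-coalition partition `{A, B}` of the agents. -/
def faSW2 (n : ℕ) (F : Fin n → Finset (Fin n)) (A B : Finset (Fin n)) : ℚ :=
  (∑ i ∈ A, faUtil n (F i) i A) + ∑ i ∈ B, faUtil n (F i) i B

variable {n : ℕ}


variable {n : ℕ}

lemma card_erase_inter (C s : Finset (Fin n)) (i : Fin n) (hi : i ∈ C) :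
    (((C.erase i) ∩ s).card : ℤ) = ((C ∩ s).card : ℤ) - (if i ∈ s then 1 else 0) := by
  rw [erase_inter]
  by_cases h : i ∈ s
  · rw [if_pos h, card_erase_of_mem (mem_inter.2 ⟨hi, h⟩)]
    have : 0 < (C ∩ s).card := card_pos.2 ⟨i, mem_inter.2 ⟨hi, h⟩⟩
    push_cast [Nat.cast_sub this]
    ring
  · rw [if_neg h, erase_eq_of_notMem (fun hm => h (mem_inter.1 hm).2)]
    ring

lemma card_insert_inter (C s : Finset (Fin n)) (j : Fin n) (hj : j ∉ C) :
    ((insert j C ∩ s).card : ℤ) = ((C ∩ s).card : ℤ) + (if j ∈ s then 1 else 0) := by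
  by_cases h : j ∈ s
  · rw [if_pos h, insert_inter_of_mem h, card_insert_of_notMem (fun hm => hj (mem_inter.1 hm).1)]
    push_cast; ring
  · rw [if_neg h, insert_inter_of_notMem h]; ring

lemma util_eq (t : Finset (Fin n)) (i : Fin n) (C : Finset (Fin n))
    (hi : i ∈ C) (hti : i ∉ t) :
    faUtil n t i C = (1 + 1/(n:ℚ)) * ((C ∩ t).card : ℚ) - ((C.card : ℚ) - 1)/(n:ℚ) := by
  have hinter : C ∩ (t ∪ {i}) = insert i (C ∩ t) := by
    ext x
    simp only [mem_inter, mem_union, mem_insert, mem_singleton]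
    constructor
    · rintro ⟨hx, ht | rfl⟩
      · exact Or.inr ⟨hx, ht⟩
      · exact Or.inl rfl
    · rintro (rfl | ⟨hx, ht⟩)
      · exact ⟨hi, Or.inr rfl⟩
      · exact ⟨hx, Or.inl ht⟩
  have hcard : ((C \ (t ∪ {i})).card : ℚ) = (C.card : ℚ) - ((C ∩ t).card : ℚ) - 1 := by
    have h1 : (C \ (t ∪ {i})).card + (C ∩ (t ∪ {i})).card = C.card :=
      card_sdiff_add_card_inter C (t ∪ {i})
    have h2 : (C ∩ (t ∪ {i})).card = (C ∩ t).card + 1 := by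
      rw [hinter, card_insert_of_notMem (fun hm => hti (mem_inter.1 hm).2)]
    have := congrArg (Nat.cast (R := ℚ)) h1
    push_cast [h2] at this
    linarith
  unfold faUtil
  rw [hcard]
  ring

lemma sw2_eq (F : Fin n → Finset (Fin n)) (hF : ∀ j, j ∉ F j) (A B : Finset (Fin n)) :
    faSW2 n F A B = (1 + 1/(n:ℚ)) *
        (((∑ i ∈ A, ((A ∩ F i).card : ℤ) + ∑ i ∈ B, ((B ∩ F i).card : ℤ)) : ℤ) : ℚ)
      - ((A.card : ℚ) * ((A.card : ℚ) - 1) + (B.card : ℚ) * ((B.card : ℚ) - 1))/(n:ℚ) := by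
  unfold faSW2
  rw [sum_congr rfl (fun i hi => util_eq (F i) i A hi (hF i)),
      sum_congr rfl (fun i hi => util_eq (F i) i B hi (hF i))]
  rw [sum_sub_distrib, sum_sub_distrib, ← mul_sum, ← mul_sum, sum_const, sum_const]
  push_cast
  ring

lemma swap_sum (F : Fin n → Finset (Fin n)) (hF : ∀ j, j ∉ F j) (C : Finset (Fin n))
    (i j : Fin n) (hi : i ∈ C) (hj : j ∉ C) :
    ∑ k ∈ insert j (C.erase i), (((insert j (C.erase i)) ∩ F k).card : ℤ)
      = ∑ k ∈ C, ((C ∩ F k).card : ℤ)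
        - ((C ∩ F i).card : ℤ) - (∑ k ∈ C, if i ∈ F k then (1:ℤ) else 0)
        + ((C ∩ F j).card : ℤ) + (∑ k ∈ C, if j ∈ F k then (1:ℤ) else 0)
        - (if i ∈ F j then (1:ℤ) else 0) - (if j ∈ F i then (1:ℤ) else 0) := by
  have hj' : j ∉ C.erase i := fun h => hj (mem_of_mem_erase h)
  rw [sum_insert hj']
  have h1 : (((insert j (C.erase i)) ∩ F j).card : ℤ)
      = ((C ∩ F j).card : ℤ) - (if i ∈ F j then 1 else 0) := by
    rw [card_insert_inter _ _ _ hj', if_neg (hF j), add_zero, card_erase_inter _ _ _ hi]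
  have h2 : ∀ k ∈ C.erase i, (((insert j (C.erase i)) ∩ F k).card : ℤ)
      = ((C ∩ F k).card : ℤ) - (if i ∈ F k then 1 else 0) + (if j ∈ F k then 1 else 0) := by
    intro k _
    rw [card_insert_inter _ _ _ hj', card_erase_inter _ _ _ hi]
  rw [sum_congr rfl h2, h1]
  have h3 : ∑ k ∈ C.erase i,
      (((C ∩ F k).card : ℤ) - (if i ∈ F k then 1 else 0) + (if j ∈ F k then 1 else 0))
      = (∑ k ∈ C, (((C ∩ F k).card : ℤ) - (if i ∈ F k then 1 else 0) + (if j ∈ F k then 1 else 0)))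
        - (((C ∩ F i).card : ℤ) - (if i ∈ F i then 1 else 0) + (if j ∈ F i then 1 else 0)) :=
    sum_erase_eq_sub hi
  rw [h3, if_neg (hF i)]
  simp only [sum_add_distrib, sum_sub_distrib]
  ring

lemma sum_indic (s t : Finset (Fin n)) :
    ∑ i ∈ s, (if i ∈ t then (1:ℤ) else 0) = ((s ∩ t).card : ℤ) := by
  rw [Finset.sum_ite_mem, sum_const]
  simp

lemma pair_ineq (F : Fin n → Finset (Fin n)) (hF : ∀ j, j ∉ F j)
    (P₁ P₂ : Finset (Fin n)) (hd : Disjoint P₁ P₂) (hn : 0 < n)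
    (i : Fin n) (hi : i ∈ P₁) (j : Fin n) (hj : j ∈ P₂)
    (hst : faSW2 n F (insert j (P₁.erase i)) (insert i (P₂.erase j)) ≤ faSW2 n F P₁ P₂) :
    ((P₁ ∩ F j).card : ℤ) + (∑ k ∈ P₁, if j ∈ F k then (1:ℤ) else 0)
      + ((P₂ ∩ F i).card : ℤ) + (∑ k ∈ P₂, if i ∈ F k then (1:ℤ) else 0)
    ≤ ((P₁ ∩ F i).card : ℤ) + (∑ k ∈ P₁, if i ∈ F k then (1:ℤ) else 0)
      + ((P₂ ∩ F j).card : ℤ) + (∑ k ∈ P₂, if j ∈ F k then (1:ℤ) else 0)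
      + 2 * (if i ∈ F j then (1:ℤ) else 0) + 2 * (if j ∈ F i then (1:ℤ) else 0) := by
  have hjP1 : j ∉ P₁ := fun h => (disjoint_left.1 hd h) hj
  have hiP2 : i ∉ P₂ := fun h => (disjoint_left.1 hd hi) h
  have hcA : (insert j (P₁.erase i)).card = P₁.card := by
    rw [card_insert_of_notMem (fun h => hjP1 (mem_of_mem_erase h)), card_erase_of_mem hi]
    exact Nat.succ_pred_eq_of_pos (card_pos.2 ⟨i, hi⟩)
  have hcB : (insert i (P₂.erase j)).card = P₂.card := by
    rw [card_insert_of_notMem (fun h => hiP2 (mem_of_mem_erase h)), card_erase_of_mem hj]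
    exact Nat.succ_pred_eq_of_pos (card_pos.2 ⟨j, hj⟩)
  rw [sw2_eq F hF, sw2_eq F hF, hcA, hcB] at hst
  have hpos : (0:ℚ) < 1 + 1/(n:ℚ) := by
    have : (0:ℚ) < (n:ℚ) := by exact_mod_cast hn
    positivity
  have hg : (((∑ k ∈ insert j (P₁.erase i), (((insert j (P₁.erase i)) ∩ F k).card : ℤ)
        + ∑ k ∈ insert i (P₂.erase j), (((insert i (P₂.erase j)) ∩ F k).card : ℤ)) : ℤ) : ℚ)
      ≤ (((∑ k ∈ P₁, ((P₁ ∩ F k).card : ℤ) + ∑ k ∈ P₂, ((P₂ ∩ F k).card : ℤ)) : ℤ) : ℚ) := by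
    have h2 : (1 + 1/(n:ℚ)) * (((∑ k ∈ insert j (P₁.erase i), (((insert j (P₁.erase i)) ∩ F k).card : ℤ)
        + ∑ k ∈ insert i (P₂.erase j), (((insert i (P₂.erase j)) ∩ F k).card : ℤ)) : ℤ) : ℚ)
      ≤ (1 + 1/(n:ℚ)) * (((∑ k ∈ P₁, ((P₁ ∩ F k).card : ℤ) + ∑ k ∈ P₂, ((P₂ ∩ F k).card : ℤ)) : ℤ) : ℚ) := by
      linarith
    exact le_of_mul_le_mul_left h2 hpos
  have hgZ : ∑ k ∈ insert j (P₁.erase i), (((insert j (P₁.erase i)) ∩ F k).card : ℤ)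
        + ∑ k ∈ insert i (P₂.erase j), (((insert i (P₂.erase j)) ∩ F k).card : ℤ)
      ≤ ∑ k ∈ P₁, ((P₁ ∩ F k).card : ℤ) + ∑ k ∈ P₂, ((P₂ ∩ F k).card : ℤ) := by
    exact_mod_cast hg
  rw [swap_sum F hF P₁ i j hi hjP1, swap_sum F hF P₂ j i hj hiP2] at hgZ
  linarith

/-- For a swap-stable partition `{P₁, P₂}` of `N` with `|P₁| = ⌈n/2⌉` and `|P₂| = ⌊n/2⌋`,
the number `f'` of friendship relations with both endpoints in `P₁` or both in `P₂`
satisfies `f' ≥ ((n−2)/(2n−1))·f`, where `f` is the total number of friendship relations. -/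
theorem stmt14 (n : ℕ) (hn : 0 < n) (F : Fin n → Finset (Fin n)) (hF : ∀ j, j ∉ F j)
    (P₁ P₂ : Finset (Fin n))
    (hd : Disjoint P₁ P₂) (hu : P₁ ∪ P₂ = univ)
    (hc1 : P₁.card = (n + 1) / 2) (hc2 : P₂.card = n / 2)
    (hstable : ∀ i ∈ P₁, ∀ j ∈ P₂,
      faSW2 n F (insert j (P₁.erase i)) (insert i (P₂.erase j)) ≤ faSW2 n F P₁ P₂) :
    ((n : ℚ) - 2) / (2 * (n : ℚ) - 1) * ((∑ i : Fin n, (F i).card : ℕ) : ℚ) ≤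
      (((∑ i ∈ P₁, (P₁ ∩ F i).card) + ∑ i ∈ P₂, (P₂ ∩ F i).card : ℕ) : ℚ) := by
  set f1 : ℤ := ∑ i ∈ P₁, ((P₁ ∩ F i).card : ℤ) with hf1
  set f2 : ℤ := ∑ i ∈ P₂, ((P₂ ∩ F i).card : ℤ) with hf2
  set x : ℤ := ∑ i ∈ P₁, ((P₂ ∩ F i).card : ℤ) with hx
  set y : ℤ := ∑ j ∈ P₂, ((P₁ ∩ F j).card : ℤ) with hy
    -- summed stability inequality
  have hsum : ∑ i ∈ P₁, ∑ j ∈ P₂,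
      (((P₁ ∩ F j).card : ℤ) + (∑ k ∈ P₁, if j ∈ F k then (1:ℤ) else 0)
        + ((P₂ ∩ F i).card : ℤ) + (∑ k ∈ P₂, if i ∈ F k then (1:ℤ) else 0))
      ≤ ∑ i ∈ P₁, ∑ j ∈ P₂,
      (((P₁ ∩ F i).card : ℤ) + (∑ k ∈ P₁, if i ∈ F k then (1:ℤ) else 0)
        + ((P₂ ∩ F j).card : ℤ) + (∑ k ∈ P₂, if j ∈ F k then (1:ℤ) else 0)
        + 2 * (if i ∈ F j then (1:ℤ) else 0) + 2 * (if j ∈ F i then (1:ℤ) else 0)) :=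
    sum_le_sum (fun i hi => sum_le_sum (fun j hj =>
      pair_ineq F hF P₁ P₂ hd hn i hi j hj (hstable i hi j hj)))
  have e1 : ∑ _i ∈ P₁, ∑ j ∈ P₂, ((P₁ ∩ F j).card : ℤ) = ((P₁.card : ℕ) : ℤ) * y := by
    rw [sum_const, nsmul_eq_mul]
  have e2 : ∑ _i ∈ P₁, ∑ j ∈ P₂, (∑ k ∈ P₁, if j ∈ F k then (1:ℤ) else 0) = ((P₁.card : ℕ) : ℤ) * x := by
    rw [sum_const, nsmul_eq_mul]
    congr 1
    rw [sum_comm]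
    exact sum_congr rfl fun k _ => sum_indic P₂ (F k)
  have e3 : ∑ i ∈ P₁, ∑ _j ∈ P₂, ((P₂ ∩ F i).card : ℤ) = ((P₂.card : ℕ) : ℤ) * x := by
    simp only [sum_const, nsmul_eq_mul]
    rw [← mul_sum]
  have e4 : ∑ i ∈ P₁, ∑ _j ∈ P₂, (∑ k ∈ P₂, if i ∈ F k then (1:ℤ) else 0) = ((P₂.card : ℕ) : ℤ) * y := by
    simp only [sum_const, nsmul_eq_mul]
    rw [← mul_sum]
    congr 1
    rw [sum_comm]
    exact sum_congr rfl fun k _ => sum_indic P₁ (F k)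
  have e5 : ∑ i ∈ P₁, ∑ j ∈ P₂, (if i ∈ F j then (1:ℤ) else 0) = y := by
    rw [sum_comm]
    exact sum_congr rfl fun j _ => sum_indic P₁ (F j)
  have e6 : ∑ i ∈ P₁, ∑ j ∈ P₂, (if j ∈ F i then (1:ℤ) else 0) = x :=
    sum_congr rfl fun i _ => sum_indic P₂ (F i)
  have e7 : ∑ i ∈ P₁, ∑ _j ∈ P₂, ((P₁ ∩ F i).card : ℤ) = ((P₂.card : ℕ) : ℤ) * f1 := by
    simp only [sum_const, nsmul_eq_mul]
    rw [← mul_sum]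
  have e8 : ∑ i ∈ P₁, ∑ _j ∈ P₂, (∑ k ∈ P₁, if i ∈ F k then (1:ℤ) else 0) = ((P₂.card : ℕ) : ℤ) * f1 := by
    simp only [sum_const, nsmul_eq_mul]
    rw [← mul_sum]
    congr 1
    rw [sum_comm]
    exact sum_congr rfl fun k _ => sum_indic P₁ (F k)
  have e9 : ∑ _i ∈ P₁, ∑ j ∈ P₂, ((P₂ ∩ F j).card : ℤ) = ((P₁.card : ℕ) : ℤ) * f2 := by
    rw [sum_const, nsmul_eq_mul]
  have e10 : ∑ _i ∈ P₁, ∑ j ∈ P₂, (∑ k ∈ P₂, if j ∈ F k then (1:ℤ) else 0) = ((P₁.card : ℕ) : ℤ) * f2 := by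
    rw [sum_const, nsmul_eq_mul]
    congr 1
    rw [sum_comm]
    exact sum_congr rfl fun k _ => sum_indic P₂ (F k)
  have hL : ∑ i ∈ P₁, ∑ j ∈ P₂,
      (((P₁ ∩ F j).card : ℤ) + (∑ k ∈ P₁, if j ∈ F k then (1:ℤ) else 0)
        + ((P₂ ∩ F i).card : ℤ) + (∑ k ∈ P₂, if i ∈ F k then (1:ℤ) else 0))
      = ((P₁.card : ℕ) : ℤ) * y + ((P₁.card : ℕ) : ℤ) * x + ((P₂.card : ℕ) : ℤ) * x + ((P₂.card : ℕ) : ℤ) * y := by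
    simp only [sum_add_distrib]
    rw [e1, e2, e3, e4]
  have hR : ∑ i ∈ P₁, ∑ j ∈ P₂,
      (((P₁ ∩ F i).card : ℤ) + (∑ k ∈ P₁, if i ∈ F k then (1:ℤ) else 0)
        + ((P₂ ∩ F j).card : ℤ) + (∑ k ∈ P₂, if j ∈ F k then (1:ℤ) else 0)
        + 2 * (if i ∈ F j then (1:ℤ) else 0) + 2 * (if j ∈ F i then (1:ℤ) else 0))
      = ((P₂.card : ℕ) : ℤ) * f1 + ((P₂.card : ℕ) : ℤ) * f1 + ((P₁.card : ℕ) : ℤ) * f2 + ((P₁.card : ℕ) : ℤ) * f2 + 2 * y + 2 * x := by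
    simp only [sum_add_distrib, ← mul_sum]
    rw [e7, e8, e9, e10, e5, e6]
  rw [hL, hR] at hsum
  -- cardinality facts
  have hcard : P₁.card + P₂.card = n := by
    rw [← card_union_of_disjoint hd, hu, card_univ, Fintype.card_fin]
  have h3 : ((P₁.card : ℕ) : ℤ) + ((P₂.card : ℕ) : ℤ) = (n : ℤ) := by exact_mod_cast hcard
  have hle : ((P₂.card : ℕ) : ℤ) ≤ ((P₁.card : ℕ) : ℤ) := by
    have : P₂.card ≤ P₁.card := by rw [hc1, hc2]; omega
    exact_mod_cast this
  have h2n1 : 2 * ((P₁.card : ℕ) : ℤ) ≤ (n : ℤ) + 1 := by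
    have : 2 * P₁.card ≤ n + 1 := by rw [hc1]; omega
    exact_mod_cast this
  have hxnn : 0 ≤ x := sum_nonneg fun i _ => by positivity
  have hynn : 0 ≤ y := sum_nonneg fun i _ => by positivity
  have hf1nn : 0 ≤ f1 := sum_nonneg fun i _ => by positivity
  have hf2nn : 0 ≤ f2 := sum_nonneg fun i _ => by positivity
  -- step 1
  have eL : ((P₁.card : ℕ) : ℤ) * y + ((P₁.card : ℕ) : ℤ) * x + ((P₂.card : ℕ) : ℤ) * x + ((P₂.card : ℕ) : ℤ) * y = (((P₁.card : ℕ) : ℤ) + ((P₂.card : ℕ) : ℤ)) * (x + y) := by ring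
  have step1 : ((n:ℤ) - 2) * (x + y) ≤ 2 * ((P₂.card : ℕ) : ℤ) * f1 + 2 * ((P₁.card : ℕ) : ℤ) * f2 := by
    have h' : (((P₁.card : ℕ) : ℤ) + ((P₂.card : ℕ) : ℤ)) * (x + y) ≤ ((P₂.card : ℕ) : ℤ) * f1 + ((P₂.card : ℕ) : ℤ) * f1 + ((P₁.card : ℕ) : ℤ) * f2 + ((P₁.card : ℕ) : ℤ) * f2 + 2 * y + 2 * x := by
      rw [← eL]; exact hsum
    rw [h3] at h'
    linarith [h']
  have step2 : 2 * ((P₂.card : ℕ) : ℤ) * f1 + 2 * ((P₁.card : ℕ) : ℤ) * f2 ≤ ((n:ℤ) + 1) * (f1 + f2) := by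
    have hA : 2 * ((P₂.card : ℕ) : ℤ) * f1 ≤ 2 * ((P₁.card : ℕ) : ℤ) * f1 :=
      mul_le_mul_of_nonneg_right (by linarith) hf1nn
    have hC : (2 * ((P₁.card : ℕ) : ℤ)) * (f1 + f2) ≤ ((n:ℤ) + 1) * (f1 + f2) :=
      mul_le_mul_of_nonneg_right h2n1 (by linarith)
    linarith [hA, hC]
  -- total friendships decomposition
  have hfi : ∀ i : Fin n, (F i).card = (P₁ ∩ F i).card + (P₂ ∩ F i).card := by
    intro i
    have hdij : Disjoint (P₁ ∩ F i) (P₂ ∩ F i) :=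
      Disjoint.mono inter_subset_left inter_subset_left hd
    rw [← card_union_of_disjoint hdij, ← union_inter_distrib_right, hu, univ_inter]
  have htot : ((∑ i : Fin n, (F i).card : ℕ) : ℤ) = f1 + x + f2 + y := by
    rw [← hu, sum_union hd]
    push_cast
    rw [show (∑ i ∈ P₁, ((F i).card:ℤ)) = ∑ i ∈ P₁, (((P₁ ∩ F i).card:ℤ) + ((P₂ ∩ F i).card:ℤ))
          from sum_congr rfl fun i _ => by rw [hfi i]; push_cast; ring,
        show (∑ i ∈ P₂, ((F i).card:ℤ)) = ∑ i ∈ P₂, (((P₁ ∩ F i).card:ℤ) + ((P₂ ∩ F i).card:ℤ))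
          from sum_congr rfl fun i _ => by rw [hfi i]; push_cast; ring]
    rw [sum_add_distrib, sum_add_distrib, hf1, hf2, hx, hy]
    ring
  have hinner : (((∑ i ∈ P₁, (P₁ ∩ F i).card) + ∑ i ∈ P₂, (P₂ ∩ F i).card : ℕ) : ℤ)
      = f1 + f2 := by push_cast; rfl
  -- final integer inequality
  have hZ : ((n:ℤ) - 2) * ((∑ i : Fin n, (F i).card : ℕ) : ℤ)
      ≤ (2 * (n:ℤ) - 1) * (((∑ i ∈ P₁, (P₁ ∩ F i).card) + ∑ i ∈ P₂, (P₂ ∩ F i).card : ℕ) : ℤ) := by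
    rw [htot, hinner]
    linarith [step1, step2]
  -- conclude in ℚ
  have hden : (0:ℚ) < 2 * (n:ℚ) - 1 := by
    have : (1:ℚ) ≤ (n:ℚ) := by exact_mod_cast hn
    linarith
  rw [div_mul_eq_mul_div, div_le_iff₀ hden]
  have hQ : ((n:ℚ) - 2) * ((∑ i : Fin n, (F i).card : ℕ) : ℚ)
      ≤ (2 * (n:ℚ) - 1) * (((∑ i ∈ P₁, (P₁ ∩ F i).card) + ∑ i ∈ P₂, (P₂ ∩ F i).card : ℕ) : ℚ) := by
    exact_mod_cast hZ
  linarith
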